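/- Let u(x) = x - a/x with a > 0, and let F : ℝ → ℝ be continuous with F, x·F(x), and x³·F(x) all integrable on ℝ. Then the principal-value integral of x³·F(u(x)) over ℝ equals the integral over ℝ of (x³ + 2a x)·F(x) dx. -/

import Mathlib

/-!
On each half-line `x ↦ x - a / x` is a bijection onto `ℝ`, inverted by the roots
`x± = (t ± √(t² + 4a)) / 2` of `x² - t x - a`. Substituting, the weight `x³` becomes
`x±³ / (1 + a / x±²) = ± x±⁴ / √(t² + 4a)`, and the two weights add up to
`(x₊⁴ - x₋⁴) / (x₊ - x₋) = (x₊ + x₋) (x₊² + x₋²) = t (t² + 2a)`.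
Both substituted integrands are integrable because `|x±| ≤ |t| + √a`.
-/

open MeasureTheory Set

theorem MeasureTheory.Integrable.mul_of_abs_le_mul_pow_add {φ F : ℝ → ℝ} {n : ℕ} {A B : ℝ}
    (hF : Integrable F) (hFn : Integrable fun t => t ^ n * F t) (hφ : AEStronglyMeasurable φ)
    (hbound : ∀ t, |φ t| ≤ A * |t| ^ n + B) : Integrable fun t => φ t * F t := by
  refine ((hFn.norm.const_mul A).add (hF.norm.const_mul B)).mono' (hφ.mul hF.1)
    (ae_of_all _ fun t => ?_)
  simp only [Pi.add_apply, Real.norm_eq_abs, abs_mul, abs_pow]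
  nlinarith [hbound t, abs_nonneg (F t)]

/-- The positive solution of `x - a / x = t` when `0 < a`; the negative one is
`-posRoot a (-t)`. -/
noncomputable def posRoot (a t : ℝ) : ℝ := (t + √(t ^ 2 + 4 * a)) / 2

section

variable {a : ℝ}

@[fun_prop]
theorem continuous_posRoot : Continuous (posRoot a) := by
  unfold posRoot
  fun_prop

theorem posRoot_pos (ha : 0 < a) (t : ℝ) : 0 < posRoot a t := by
  have : |t| < √(t ^ 2 + 4 * a) := Real.lt_sqrt_of_sq_lt (by rw [sq_abs]; linarith)
  unfold posRoot
  linarith [neg_abs_le t]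

theorem abs_posRoot_le (ha : 0 ≤ a) (t : ℝ) : |posRoot a t| ≤ |t| + √a := by
  have h_le : √(t ^ 2 + 4 * a) ≤ |t| + 2 * √a := by
    rw [Real.sqrt_le_iff]
    refine ⟨by positivity, ?_⟩
    nlinarith [sq_abs t, Real.sq_sqrt ha, abs_nonneg t, Real.sqrt_nonneg a]
  have h_ge : |t| ≤ √(t ^ 2 + 4 * a) := Real.abs_le_sqrt (by linarith)
  rw [abs_le]
  unfold posRoot
  constructor <;> linarith [neg_abs_le t, le_abs_self t]

theorem posRoot_sub_div (ha : 0 < a) (t : ℝ) : posRoot a t - a / posRoot a t = t := by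
  have hσ : √(t ^ 2 + 4 * a) ^ 2 = t ^ 2 + 4 * a := Real.sq_sqrt (by positivity)
  have hr := (posRoot_pos ha t).ne'
  field_simp
  unfold posRoot
  linear_combination hσ / 4

theorem posRoot_sub_div_self (ha : 0 ≤ a) {x : ℝ} (hx : 0 < x) : posRoot a (x - a / x) = x := by
  have hsq : (x - a / x) ^ 2 + 4 * a = (x + a / x) ^ 2 := by
    field_simp
    ring
  rw [posRoot, hsq, Real.sqrt_sq (by positivity)]
  ring

theorem invOn_posRoot (ha : 0 < a) :
    InvOn (posRoot a) (fun x => x - a / x) (Ioi 0) univ :=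
  ⟨fun _ hx => posRoot_sub_div_self ha.le hx, fun t _ => posRoot_sub_div ha t⟩

theorem invOn_neg_posRoot_neg (ha : 0 < a) :
    InvOn (fun t => -posRoot a (-t)) (fun x => x - a / x) (Iio 0) univ := by
  refine ⟨fun x hx => ?_, fun t _ => ?_⟩ <;> dsimp only
  · rw [show -(x - a / x) = -x - a / -x by ring, posRoot_sub_div_self ha.le (neg_pos.2 hx),
      neg_neg]
  · rw [show -posRoot a (-t) - a / -posRoot a (-t) = -(posRoot a (-t) - a / posRoot a (-t)) by
      ring, posRoot_sub_div ha, neg_neg]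

theorem hasDerivAt_sub_div {x : ℝ} (hx : x ≠ 0) :
    HasDerivAt (fun x => x - a / x) (1 + a / x ^ 2) x := by
  have h := (hasDerivAt_id' x).sub ((hasDerivAt_inv hx).const_mul a)
  simp only [← div_eq_mul_inv, mul_neg, sub_neg_eq_add] at h
  exact h

theorem integral_mul_comp_sub_div (ha : 0 ≤ a) {s : Set ℝ} (hs : MeasurableSet s)
    (hs0 : (0 : ℝ) ∉ s) {g : ℝ → ℝ} (hg : InvOn g (fun x => x - a / x) s univ)
    (hgs : MapsTo g univ s) (h F : ℝ → ℝ) :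
    ∫ x in s, h x * F (x - a / x) = ∫ t, h (g t) / (1 + a / g t ^ 2) * F t := by
  have hbij := hg.bijOn (mapsTo_univ _ _) hgs
  have hderiv : ∀ x ∈ s, HasDerivWithinAt (fun x => x - a / x) (1 + a / x ^ 2) s x :=
    fun x hx => (hasDerivAt_sub_div (ne_of_mem_of_not_mem hx hs0)).hasDerivWithinAt
  calc ∫ x in s, h x * F (x - a / x)
      = ∫ x in s, |1 + a / x ^ 2| • (h (g (x - a / x)) / (1 + a / g (x - a / x) ^ 2)
          * F (x - a / x)) := by
        refine setIntegral_congr_fun hs fun x hx => ?_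
        have hpos : 0 < 1 + a / x ^ 2 := by positivity
        simp only [smul_eq_mul, hg.1 hx, abs_of_pos hpos]
        field_simp
    _ = ∫ t in (fun x => x - a / x) '' s, h (g t) / (1 + a / g t ^ 2) * F t :=
        (integral_image_eq_integral_abs_deriv_smul hs hderiv hbij.injOn
          fun t => h (g t) / (1 + a / g t ^ 2) * F t).symm
    _ = ∫ t, h (g t) / (1 + a / g t ^ 2) * F t := by rw [hbij.image_eq, setIntegral_univ]

theorem abs_cube_div_one_add_div_sq_le (ha : 0 ≤ a) (x : ℝ) :
    |x ^ 3 / (1 + a / x ^ 2)| ≤ |x| ^ 3 := by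
  rw [abs_div, abs_pow, abs_of_pos (by positivity : 0 < 1 + a / x ^ 2)]
  exact div_le_self (by positivity) (le_add_of_nonneg_right (by positivity))

theorem integrable_cube_div_one_add_div_sq_comp_mul {c : ℝ} (ha : 0 ≤ a) {g F : ℝ → ℝ}
    (hg : Measurable g) (hgc : ∀ t, |g t| ≤ |t| + c) (hF : Integrable F)
    (hF3 : Integrable fun t => t ^ 3 * F t) :
    Integrable fun t => g t ^ 3 / (1 + a / g t ^ 2) * F t := by
  refine hF.mul_of_abs_le_mul_pow_add hF3 (by fun_prop : Measurable _).aestronglyMeasurable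
    (A := 4) (B := 4 * c ^ 3) fun t => ?_
  have hc : 0 ≤ c := (abs_nonneg _).trans (by simpa using hgc 0)
  calc |g t ^ 3 / (1 + a / g t ^ 2)| ≤ |g t| ^ 3 := abs_cube_div_one_add_div_sq_le ha (g t)
    _ ≤ (|t| + c) ^ 3 := by gcongr; exact hgc t
    _ ≤ 2 ^ 2 * (|t| ^ 3 + c ^ 3) := add_pow_le (abs_nonneg t) hc 3
    _ = 4 * |t| ^ 3 + 4 * c ^ 3 := by ring

theorem cube_div_one_add_div_sq_posRoot (ha : 0 < a) (t : ℝ) :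
    posRoot a t ^ 3 / (1 + a / posRoot a t ^ 2) = posRoot a t ^ 4 / √(t ^ 2 + 4 * a) := by
  have hσ : √(t ^ 2 + 4 * a) ^ 2 = t ^ 2 + 4 * a := Real.sq_sqrt (by positivity)
  have hr := (posRoot_pos ha t).ne'
  have hsq : posRoot a t ^ 2 + a = posRoot a t * √(t ^ 2 + 4 * a) := by
    unfold posRoot
    linear_combination -hσ / 4
  rw [one_add_div (pow_ne_zero 2 hr), hsq]
  field_simp

theorem cube_div_one_add_div_sq_roots_add (ha : 0 < a) (t : ℝ) :
    (-posRoot a (-t)) ^ 3 / (1 + a / (-posRoot a (-t)) ^ 2)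
      + posRoot a t ^ 3 / (1 + a / posRoot a t ^ 2) = t ^ 3 + 2 * a * t := by
  have hσ : √(t ^ 2 + 4 * a) ^ 2 = t ^ 2 + 4 * a := Real.sq_sqrt (by positivity)
  rw [neg_sq, Odd.neg_pow (by decide), neg_div, cube_div_one_add_div_sq_posRoot ha,
    cube_div_one_add_div_sq_posRoot ha, neg_sq, neg_add_eq_sub, div_sub_div_same,
    div_eq_iff (by positivity), posRoot, posRoot, neg_sq]
  linear_combination (t * √(t ^ 2 + 4 * a) / 2) * hσ

end

theorem meromorphic_reduction_weight_cube_general (a : ℝ) (ha : 0 < a)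
    (F : ℝ → ℝ)
    (hInt : Integrable F)
    (hx3Int : Integrable (fun x => x ^ 3 * F x)) :
    (∫ x in Iio (0:ℝ), x ^ 3 * F (x - a / x)) + (∫ x in Ioi (0:ℝ), x ^ 3 * F (x - a / x))
      = ∫ x, (x ^ 3 + 2 * a * x) * F x := by
  rw [integral_mul_comp_sub_div ha.le measurableSet_Iio self_notMem_Iio
      (invOn_neg_posRoot_neg ha) (fun t _ => neg_neg_of_pos (posRoot_pos ha (-t))),
    integral_mul_comp_sub_div ha.le measurableSet_Ioi self_notMem_Ioi (invOn_posRoot ha)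
      (fun t _ => posRoot_pos ha t),
    ← integral_add
      (integrable_cube_div_one_add_div_sq_comp_mul ha.le (by fun_prop)
        (fun t => by simpa using abs_posRoot_le ha.le (-t)) hInt hx3Int)
      (integrable_cube_div_one_add_div_sq_comp_mul ha.le (by fun_prop)
        (abs_posRoot_le ha.le) hInt hx3Int)]
  congr with t
  rw [← add_mul, cube_div_one_add_div_sq_roots_add ha]

theorem meromorphic_reduction_weight_cube (a : ℝ) (ha : 0 < a)
    (F : ℝ → ℝ) (hF : Continuous F)
    (hInt : Integrable F) (hxInt : Integrable (fun x => x * F x))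
    (hx3Int : Integrable (fun x => x ^ 3 * F x)) :
    (∫ x in Iio (0:ℝ), x ^ 3 * F (x - a / x)) + (∫ x in Ioi (0:ℝ), x ^ 3 * F (x - a / x))
      = ∫ x, (x ^ 3 + 2 * a * x) * F x :=
  meromorphic_reduction_weight_cube_general a ha F hInt hx3Int
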